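/- arXiv:2203.14636 — 3 statements merged into one kernel-verified Lean document; each statement's English description precedes it below -/
import Mathlib

section
/- Suppose d₁, d₂, d₃, d₄ > 0 satisfy d₂ = d̂₂ d₁/(2d₁ − d̂₁), d₃ = d̂₃ d₁/d̂₁, d₄ = d̂₄ d₁/(2d₁ − d̂₁) (with 2d₁ ≠ d̂₁), together with the constraint d₁² + d₃² − d₂² − d₄² = 0, where d̂₁, d̂₂, d̂₃, d̂₄ > 0. Then d₁ = d̂₁ (K₁₃ ± √(K₁₃ K₂₄)) / (2 K₁₃), where K₁₃ = d̂₁² + d̂₃² and K₂₄ = d̂₂² + d̂₄². -/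
/-! The first-order relations make `d₂, d₃, d₄` proportional to `d₁`, so dividing the rectangle
constraint by `d₁²` leaves `K₁₃ / d̂₁² = K₂₄ / (2d₁ - d̂₁)²`, a quadratic in `d₁` solved by the
quadratic formula. -/

lemma mul_sq_eq_of_sq_add_sq_eq {d a b c e t : ℝ} (hd : d ≠ 0) (ha : a ≠ 0) (ht : t ≠ 0)
    (h : d ^ 2 + (c * d / a) ^ 2 = (b * d / t) ^ 2 + (e * d / t) ^ 2) :
    (a ^ 2 + c ^ 2) * t ^ 2 = a ^ 2 * (b ^ 2 + e ^ 2) := by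
  field_simp at h
  linear_combination h

lemma eq_or_eq_of_mul_sq_two_mul_sub_eq {K L a x : ℝ} (hK : 0 < K) (hL : 0 ≤ L)
    (h : K * (2 * x - a) ^ 2 = a ^ 2 * L) :
    x = a * (K + √(K * L)) / (2 * K) ∨ x = a * (K - √(K * L)) / (2 * K) := by
  have hsqrt : √(K * L) ^ 2 = K * L := Real.sq_sqrt (by positivity)
  have hsq : (K * (2 * x - a)) ^ 2 = (a * √(K * L)) ^ 2 := by
    linear_combination K * h - a ^ 2 * hsqrt
  rcases sq_eq_sq_iff_eq_or_eq_neg.mp hsq with h' | h'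
  · left
    rw [eq_div_iff (by positivity)]
    linear_combination h'
  · right
    rw [eq_div_iff (by positivity)]
    linear_combination h'

theorem stmt1_general (d₁ d₂ d₃ d₄ dh₁ dh₂ dh₃ dh₄ : ℝ)
    (hd₁ : 0 < d₁)
    (hdh₁ : 0 < dh₁)
    (hne : 2 * d₁ ≠ dh₁)
    (h₂ : d₂ = dh₂ * d₁ / (2 * d₁ - dh₁))
    (h₃ : d₃ = dh₃ * d₁ / dh₁)
    (h₄ : d₄ = dh₄ * d₁ / (2 * d₁ - dh₁))
    (hcon : d₁ ^ 2 + d₃ ^ 2 - d₂ ^ 2 - d₄ ^ 2 = 0) :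
    d₁ = dh₁ * ((dh₁ ^ 2 + dh₃ ^ 2) +
        Real.sqrt ((dh₁ ^ 2 + dh₃ ^ 2) * (dh₂ ^ 2 + dh₄ ^ 2))) / (2 * (dh₁ ^ 2 + dh₃ ^ 2)) ∨
    d₁ = dh₁ * ((dh₁ ^ 2 + dh₃ ^ 2) -
        Real.sqrt ((dh₁ ^ 2 + dh₃ ^ 2) * (dh₂ ^ 2 + dh₄ ^ 2))) / (2 * (dh₁ ^ 2 + dh₃ ^ 2)) := by
  subst h₂ h₃ h₄
  have hkey : (dh₁ ^ 2 + dh₃ ^ 2) * (2 * d₁ - dh₁) ^ 2 = dh₁ ^ 2 * (dh₂ ^ 2 + dh₄ ^ 2) :=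
    mul_sq_eq_of_sq_add_sq_eq hd₁.ne' hdh₁.ne' (sub_ne_zero.mpr hne) (by linarith)
  exact eq_or_eq_of_mul_sq_two_mul_sub_eq (by positivity) (by positivity) hkey

/-- ML-estimation closed form: under the first-order relations and the rectangle
constraint, `d₁ = d̂₁ (K₁₃ ± √(K₁₃K₂₄)) / (2K₁₃)`. -/
theorem stmt1 (d₁ d₂ d₃ d₄ dh₁ dh₂ dh₃ dh₄ : ℝ)
    (hd₁ : 0 < d₁) (hd₂ : 0 < d₂) (hd₃ : 0 < d₃) (hd₄ : 0 < d₄)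
    (hdh₁ : 0 < dh₁) (hdh₂ : 0 < dh₂) (hdh₃ : 0 < dh₃) (hdh₄ : 0 < dh₄)
    (hne : 2 * d₁ ≠ dh₁)
    (h₂ : d₂ = dh₂ * d₁ / (2 * d₁ - dh₁))
    (h₃ : d₃ = dh₃ * d₁ / dh₁)
    (h₄ : d₄ = dh₄ * d₁ / (2 * d₁ - dh₁))
    (hcon : d₁ ^ 2 + d₃ ^ 2 - d₂ ^ 2 - d₄ ^ 2 = 0) :
    d₁ = dh₁ * ((dh₁ ^ 2 + dh₃ ^ 2) +
        Real.sqrt ((dh₁ ^ 2 + dh₃ ^ 2) * (dh₂ ^ 2 + dh₄ ^ 2))) / (2 * (dh₁ ^ 2 + dh₃ ^ 2)) ∨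
    d₁ = dh₁ * ((dh₁ ^ 2 + dh₃ ^ 2) -
        Real.sqrt ((dh₁ ^ 2 + dh₃ ^ 2) * (dh₂ ^ 2 + dh₄ ^ 2))) / (2 * (dh₁ ^ 2 + dh₃ ^ 2)) :=
  stmt1_general d₁ d₂ d₃ d₄ dh₁ dh₂ dh₃ dh₄ hd₁ hdh₁ hne h₂ h₃ h₄ hcon
end

section
/- For the coplanar anchor configuration p₁=(0,0,0), p₂=(0,a,0), p₃=(0,a,b), p₄=(0,0,b) with a,b > 0 and a target p = (x,y,z) with x > 0, the four unit vectors uₘ = (p − pₘ)/‖p − pₘ‖ span ℝ³, so the Fisher information matrix Ψ = (1/σ²)Σₘ uₘuₘᵀ is invertible. -/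
/-!
The vectors `p - qₘ` from the three anchors `(0,0,0)`, `(0,a,0)`, `(0,a,b)` differ by `a e₁` and
`b e₂`, so anything orthogonal to all of them is orthogonal to `e₁`, `e₂` and then, as `p 0 ≠ 0`,
to `e₀`; normalising by the nonzero lengths does not change the span. With `U` the matrix whose
rows are the `uₘ`, `Ψ = σ⁻² Uᵀ U`, and spanning rows make `U` injective, hence `Ψ` positive
definite.
-/

open Finset

theorem Submodule.span_range_smul_eq_of_isUnit {R M ι : Type*} [Semiring R] [AddCommMonoid M]
    [Module R M] (c : ι → R) (hc : ∀ i, IsUnit (c i)) (v : ι → M) :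
    span R (Set.range fun i => c i • v i) = span R (Set.range v) := by
  refine le_antisymm (span_le.2 ?_) (span_le.2 ?_)
  · rintro _ ⟨i, rfl⟩
    exact smul_mem _ _ (subset_span ⟨i, rfl⟩)
  · rintro _ ⟨i, rfl⟩
    rw [← inv_smul_smul (hc i).unit (v i)]
    exact smul_mem _ _ (subset_span ⟨i, rfl⟩)

theorem Matrix.mulVec_injective_of_span_range_eq_top {R m n : Type*} [CommRing R] [Fintype n]
    [DecidableEq n] {A : Matrix m n R} (hA : Submodule.span R (Set.range A) = ⊤) :
    Function.Injective A.mulVec := by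
  rw [← Matrix.coe_mulVecLin, ← LinearMap.ker_eq_bot, LinearMap.ker_eq_bot']
  intro w hw
  refine (map_eq_zero_iff _ (dotProductEquiv R n).injective).1 <|
    LinearMap.ext_on_range hA fun i => ?_
  simpa [dotProduct_comm, mulVec] using congr_fun hw i

theorem EuclideanSpace.posDef_sum_mul_of_span_eq_top {ι n : Type*} [Fintype ι] [Fintype n]
    [DecidableEq n] {u : ι → EuclideanSpace ℝ n} (hu : Submodule.span ℝ (Set.range u) = ⊤) :
    (Matrix.of fun i j => ∑ m, u m i * u m j).PosDef := by
  let A : Matrix ι n ℝ := Matrix.of fun m => WithLp.ofLp (u m)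
  have hA : Submodule.span ℝ (Set.range A) = ⊤ := by
    have : Set.range A = (WithLp.linearEquiv 2 ℝ (n → ℝ)).toLinearMap '' Set.range u := by
      rw [← Set.range_comp]; rfl
    rw [this, ← Submodule.map_span, hu, Submodule.map_top, LinearEquiv.range]
  convert Matrix.PosDef.conjTranspose_mul_self A (Matrix.mulVec_injective_of_span_range_eq_top hA)
  ext i j
  simp [A, Matrix.mul_apply]

theorem span_range_sub_eq_top_of_rectangle {ι : Type*} {a b : ℝ} (ha : a ≠ 0) (hb : b ≠ 0)
    (p : EuclideanSpace ℝ (Fin 3)) (hp : p 0 ≠ 0) (q : ι → EuclideanSpace ℝ (Fin 3)) (i₀ i₁ i₂ : ι)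
    (h0 : q i₀ 0 = 0 ∧ q i₀ 1 = 0 ∧ q i₀ 2 = 0)
    (h1 : q i₁ 0 = 0 ∧ q i₁ 1 = a ∧ q i₁ 2 = 0)
    (h2 : q i₂ 0 = 0 ∧ q i₂ 1 = a ∧ q i₂ 2 = b) :
    Submodule.span ℝ (Set.range fun m => p - q m) = ⊤ := by
  rw [← Submodule.orthogonal_eq_bot_iff, Submodule.eq_bot_iff]
  intro w hw
  have hwq : ∀ m, ∑ i, (p i - q m i) * w i = 0 := fun m => by
    simpa [PiLp.inner_apply, mul_comm] using hw _ (Submodule.subset_span ⟨m, rfl⟩)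
  have e0 := hwq i₀
  have e1 := hwq i₁
  have e2 := hwq i₂
  simp only [Fin.sum_univ_three, h0, h1, h2, sub_zero] at e0 e1 e2
  have hw1 : w 1 = 0 := by
    simpa [ha] using (by linear_combination e0 - e1 : a * w 1 = 0)
  have hw2 : w 2 = 0 := by
    simpa [hb] using (by linear_combination e1 - e2 : b * w 2 = 0)
  have hw0 : w 0 = 0 := by
    simpa [hp] using (by linear_combination e0 - p 1 * hw1 - p 2 * hw2 : p 0 * w 0 = 0)
  ext i
  fin_cases i <;> simp [hw0, hw1, hw2]

/-- For the coplanar rectangle-corner anchors and a target strictly in front of the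
plane (`x > 0`), the four unit direction vectors span ℝ³ and the Fisher information
matrix `Ψ = (1/σ²)Σₘ uₘuₘᵀ` is invertible. -/
theorem stmt13 (a b x y z : ℝ) (ha : 0 < a) (hb : 0 < b) (hx : 0 < x)
    (σ2 : ℝ) (hσ : 0 < σ2)
    (p : EuclideanSpace ℝ (Fin 3)) (hp : p 0 = x ∧ p 1 = y ∧ p 2 = z)
    (anchors : Fin 4 → EuclideanSpace ℝ (Fin 3))
    (h1 : anchors 0 0 = 0 ∧ anchors 0 1 = 0 ∧ anchors 0 2 = 0)
    (h2 : anchors 1 0 = 0 ∧ anchors 1 1 = a ∧ anchors 1 2 = 0)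
    (h3 : anchors 2 0 = 0 ∧ anchors 2 1 = a ∧ anchors 2 2 = b)
    (h4 : anchors 3 0 = 0 ∧ anchors 3 1 = 0 ∧ anchors 3 2 = b)
    (u : Fin 4 → EuclideanSpace ℝ (Fin 3))
    (hu : ∀ m, u m = ‖p - anchors m‖⁻¹ • (p - anchors m))
    (Ψ : Matrix (Fin 3) (Fin 3) ℝ)
    (hΨ : ∀ i j, Ψ i j = (1 / σ2) * ∑ m, u m i * u m j) :
    Submodule.span ℝ (Set.range u) = ⊤ ∧ IsUnit Ψ := by
  have hdiff_ne : ∀ m, p - anchors m ≠ 0 := fun m h => by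
    have hm0 : anchors m 0 = 0 := by
      fin_cases m
      exacts [h1.1, h2.1, h3.1, h4.1]
    simpa [hm0, hp.1, hx.ne'] using congr_fun (congrArg WithLp.ofLp h) 0
  have hspan : Submodule.span ℝ (Set.range u) = ⊤ := by
    rw [funext hu, Submodule.span_range_smul_eq_of_isUnit _
      (fun m => (inv_ne_zero (norm_ne_zero_iff.2 (hdiff_ne m))).isUnit)]
    exact span_range_sub_eq_top_of_rectangle ha.ne' hb.ne' p (hp.1 ▸ hx.ne') anchors 0 1 2 h1 h2 h3
  have hΨ_eq : Ψ = (1 / σ2) • Matrix.of fun i j => ∑ m, u m i * u m j := by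
    ext i j
    simp [hΨ]
  refine ⟨hspan, ?_⟩
  rw [hΨ_eq]
  exact ((EuclideanSpace.posDef_sum_mul_of_span_eq_top hspan).smul (by positivity)).isUnit
end

section
/- Fix d̂₁,…,d̂₄ > 0, let K₁₃ = d̂₁² + d̂₃², K₂₄ = d̂₂² + d̂₄², and define d₁ = d̂₁(K₁₃ + √(K₁₃K₂₄))/(2K₁₃), d₃ = d̂₃ d₁/d̂₁, d₂ = d̂₂ d₁/(2d₁ − d̂₁), d₄ = d̂₄ d₁/(2d₁ − d̂₁). Then d₁ > d̂₁/2 (so the formulas are well defined), all dₘ > 0, and d₁² + d₃² = d₂² + d₄². -/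
/-! With `s = √(K₁₃ K₂₄)` one has `2 d₁ - d̂₁ = d̂₁ s / K₁₃ > 0`, so `d₁ > d̂₁ / 2`. Both sides of
the constraint are rescaled sums of squares: `d₁² + d₃² = K₁₃ (d₁ / d̂₁)²` and
`d₂² + d₄² = K₂₄ (d₁ / (2 d₁ - d̂₁))²`, and these agree because
`K₁₃ (2 d₁ - d̂₁)² = d̂₁² s² / K₁₃ = K₂₄ d̂₁²`. -/

section

variable {a K L : ℝ}

lemma two_mul_sub_eq_mul_sqrt_div (hK : K ≠ 0) :
    2 * (a * (K + √(K * L)) / (2 * K)) - a = a * √(K * L) / K := by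
  field_simp
  ring

lemma mul_sq_two_mul_sub_eq (hK : 0 < K) (hL : 0 ≤ L) :
    K * (2 * (a * (K + √(K * L)) / (2 * K)) - a) ^ 2 = L * a ^ 2 := by
  rw [two_mul_sub_eq_mul_sqrt_div hK.ne', div_pow, mul_pow,
    Real.sq_sqrt (mul_nonneg hK.le hL)]
  field_simp

end

lemma sq_add_sq_eq_of_scaled {a b c e t q : ℝ} (ha : a ≠ 0) (hq : q ≠ 0)
    (h : (a ^ 2 + c ^ 2) * q ^ 2 = (b ^ 2 + e ^ 2) * a ^ 2) :
    t ^ 2 + (c * t / a) ^ 2 = (b * t / q) ^ 2 + (e * t / q) ^ 2 := by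
  field_simp
  linear_combination t ^ 2 * h

/-- The closed-form ML solution (with the `+` root) is well defined and satisfies the
rectangle-distance constraint `d₁² + d₃² = d₂² + d₄²`. -/
theorem stmt14 (dh₁ dh₂ dh₃ dh₄ : ℝ)
    (hdh₁ : 0 < dh₁) (hdh₂ : 0 < dh₂) (hdh₃ : 0 < dh₃) (hdh₄ : 0 < dh₄)
    (K₁₃ K₂₄ d₁ d₂ d₃ d₄ : ℝ)
    (hK₁₃ : K₁₃ = dh₁ ^ 2 + dh₃ ^ 2) (hK₂₄ : K₂₄ = dh₂ ^ 2 + dh₄ ^ 2)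
    (h₁ : d₁ = dh₁ * (K₁₃ + Real.sqrt (K₁₃ * K₂₄)) / (2 * K₁₃))
    (h₃ : d₃ = dh₃ * d₁ / dh₁)
    (h₂ : d₂ = dh₂ * d₁ / (2 * d₁ - dh₁))
    (h₄ : d₄ = dh₄ * d₁ / (2 * d₁ - dh₁)) :
    dh₁ / 2 < d₁ ∧ 0 < d₁ ∧ 0 < d₂ ∧ 0 < d₃ ∧ 0 < d₄ ∧
    d₁ ^ 2 + d₃ ^ 2 = d₂ ^ 2 + d₄ ^ 2 := by
  have hK₁₃_pos : 0 < K₁₃ := by rw [hK₁₃]; positivity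
  have hK₂₄_pos : 0 < K₂₄ := by rw [hK₂₄]; positivity
  have hgap : 2 * d₁ - dh₁ = dh₁ * √(K₁₃ * K₂₄) / K₁₃ :=
    h₁ ▸ two_mul_sub_eq_mul_sqrt_div hK₁₃_pos.ne'
  have hgap_pos : 0 < 2 * d₁ - dh₁ := by rw [hgap]; positivity
  have hgap_sq : K₁₃ * (2 * d₁ - dh₁) ^ 2 = K₂₄ * dh₁ ^ 2 :=
    h₁ ▸ mul_sq_two_mul_sub_eq hK₁₃_pos hK₂₄_pos.le
  have hd₁ : 0 < d₁ := by linarith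
  refine ⟨by linarith, hd₁, by rw [h₂]; positivity, by rw [h₃]; positivity,
    by rw [h₄]; positivity, ?_⟩
  rw [h₂, h₃, h₄]
  exact sq_add_sq_eq_of_scaled hdh₁.ne' hgap_pos.ne' (hK₁₃ ▸ hK₂₄ ▸ hgap_sq)
end
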